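/- Let T ⊂ ℝ² be the equilateral triangle with vertices (0,1), (−√3/2,−1/2), (√3/2,−1/2), and let R be the rotation of ℝ² about the origin by angle 2π/3. For x ∈ T \ {0}, define Q(f;x) = w₁(x)·(f(x) + f(Rx) + f(R²x) − 3 f(0)) + (3√3/4)·f(0), where w₁(x) = √3/(16|x|²), and let P(x) = 16|x|²/(3√3) be a probability density on T. Then P is indeed a probability density on T (∫_T P(x) dx = 1), and for every continuous f: cl T → ℝ, ∫_T Q(f;x) P(x) dx = ∫_T f(y) dy. -/

import Mathlib

open MeasureTheory

/-- The equilateral triangle with vertices `(0,1)`, `(−√3/2,−1/2)`, `(√3/2,−1/2)`. -/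
noncomputable def triT : Set (EuclideanSpace ℝ (Fin 2)) :=
  convexHull ℝ {(!₂[0, 1] : EuclideanSpace ℝ (Fin 2)),
    (!₂[-(Real.sqrt 3 / 2), -(1 / 2)] : EuclideanSpace ℝ (Fin 2)),
    (!₂[Real.sqrt 3 / 2, -(1 / 2)] : EuclideanSpace ℝ (Fin 2))}

/-- The rotation of `ℝ²` about the origin by angle `2π/3`. -/
noncomputable def triR : EuclideanSpace ℝ (Fin 2) →ₗ[ℝ] EuclideanSpace ℝ (Fin 2) :=
  Matrix.toEuclideanLin
    !![-(1 / 2 : ℝ), -(Real.sqrt 3 / 2); Real.sqrt 3 / 2, -(1 / 2)]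

/-- The stochastic order-2 quadrature rule `P₂^tri` on the triangle. -/
noncomputable def triQ2 (f : EuclideanSpace ℝ (Fin 2) → ℝ)
    (x : EuclideanSpace ℝ (Fin 2)) : ℝ :=
  (Real.sqrt 3 / (16 * ‖x‖ ^ 2)) * (f x + f (triR x) + f (triR (triR x)) - 3 * f 0) +
    (3 * Real.sqrt 3 / 4) * f 0

/-- The sampling density `P(x) = 16|x|²/(3√3)` on the triangle. -/
noncomputable def triP (x : EuclideanSpace ℝ (Fin 2)) : ℝ :=
  16 * ‖x‖ ^ 2 / (3 * Real.sqrt 3)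

lemma triR_apply0 (x : EuclideanSpace ℝ (Fin 2)) :
    triR x 0 = -(1/2) * x 0 + -(Real.sqrt 3 / 2) * x 1 := by
  simp [triR, Matrix.toEuclideanLin_apply, Matrix.mulVec, dotProduct, Fin.sum_univ_two, Matrix.vecHead, Matrix.vecTail]

lemma triR_apply1 (x : EuclideanSpace ℝ (Fin 2)) :
    triR x 1 = (Real.sqrt 3 / 2) * x 0 + -(1/2) * x 1 := by
  simp [triR, Matrix.toEuclideanLin_apply, Matrix.mulVec, dotProduct, Fin.sum_univ_two, Matrix.vecHead, Matrix.vecTail]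

lemma sqrt3_sq : Real.sqrt 3 * Real.sqrt 3 = 3 :=
  Real.mul_self_sqrt (by norm_num)

lemma euclid_ext {x y : EuclideanSpace ℝ (Fin 2)} (h0 : x 0 = y 0) (h1 : x 1 = y 1) : x = y := by
  ext i; fin_cases i <;> assumption

lemma triR_cube (x : EuclideanSpace ℝ (Fin 2)) : triR (triR (triR x)) = x := by
  apply euclid_ext
  · simp only [triR_apply0, triR_apply1]
    linear_combination ((3 * x 0 + Real.sqrt 3 * x 1)/8) * sqrt3_sq
  · simp only [triR_apply0, triR_apply1]
    linear_combination ((-(Real.sqrt 3) * x 0 + 3 * x 1)/8) * sqrt3_sq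

lemma norm_sq_eq (x : EuclideanSpace ℝ (Fin 2)) : ‖x‖ ^ 2 = x 0 ^ 2 + x 1 ^ 2 := by
  rw [EuclideanSpace.norm_eq, Real.sq_sqrt (by positivity), Fin.sum_univ_two]
  simp [sq_abs]

lemma triR_norm (x : EuclideanSpace ℝ (Fin 2)) : ‖triR x‖ = ‖x‖ := by
  have h : ‖triR x‖ ^ 2 = ‖x‖ ^ 2 := by
    rw [norm_sq_eq, norm_sq_eq, triR_apply0, triR_apply1]
    linear_combination ((x 0 ^ 2 + x 1 ^ 2)/4) * sqrt3_sq
  rw [← Real.sqrt_sq (norm_nonneg (triR x)), h, Real.sqrt_sq (norm_nonneg x)]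

noncomputable def rotE : EuclideanSpace ℝ (Fin 2) ≃ₗᵢ[ℝ] EuclideanSpace ℝ (Fin 2) :=
  { (LinearEquiv.ofLinear triR (triR ∘ₗ triR)
      (LinearMap.ext fun x => triR_cube x)
      (LinearMap.ext fun x => triR_cube x) : EuclideanSpace ℝ (Fin 2) ≃ₗ[ℝ] EuclideanSpace ℝ (Fin 2)) with
    norm_map' := triR_norm }

lemma rotE_apply (x : EuclideanSpace ℝ (Fin 2)) : rotE x = triR x := rfl

lemma sqrt3_pos : 0 < Real.sqrt 3 := Real.sqrt_pos.mpr (by norm_num)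

def triH : Set (EuclideanSpace ℝ (Fin 2)) :=
  {x | -(1/2) ≤ x 1 ∧ Real.sqrt 3 * x 0 + x 1 ≤ 1 ∧ -(Real.sqrt 3) * x 0 + x 1 ≤ 1}

lemma isLinear_comb (a b : ℝ) :
    IsLinearMap ℝ (fun x : EuclideanSpace ℝ (Fin 2) => a * x 0 + b * x 1) := by
  constructor <;> intros <;> simp [PiLp.add_apply, PiLp.smul_apply, smul_eq_mul] <;> ring

lemma convex_triH : Convex ℝ triH := by
  have h1 : Convex ℝ {x : EuclideanSpace ℝ (Fin 2) | -(1/2) ≤ x 1} := by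
    have h := convex_halfSpace_ge (isLinear_comb 0 1) (-(1/2))
    convert h using 1 <;> ext x <;> simp
  have h2 : Convex ℝ {x : EuclideanSpace ℝ (Fin 2) | Real.sqrt 3 * x 0 + x 1 ≤ 1} := by
    have h := convex_halfSpace_le (isLinear_comb (Real.sqrt 3) 1) 1
    convert h using 1 <;> ext x <;> simp
  have h3 : Convex ℝ {x : EuclideanSpace ℝ (Fin 2) | -(Real.sqrt 3) * x 0 + x 1 ≤ 1} := by
    have h := convex_halfSpace_le (isLinear_comb (-(Real.sqrt 3)) 1) 1
    convert h using 1 <;> ext x <;> simp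
  have : triH = ({x : EuclideanSpace ℝ (Fin 2) | -(1/2) ≤ x 1} ∩ {x | Real.sqrt 3 * x 0 + x 1 ≤ 1}) ∩ {x | -(Real.sqrt 3) * x 0 + x 1 ≤ 1} := by
    ext x; simp [triH, Set.mem_setOf_eq, and_assoc]
  rw [this]; exact (h1.inter h2).inter h3

lemma triT_eq_triH : triT = triH := by
  apply Set.Subset.antisymm
  · rw [triT]
    apply convexHull_min _ convex_triH
    intro v hv
    simp only [Set.mem_insert_iff, Set.mem_singleton_iff] at hv
    rcases hv with h | h | h <;> subst h <;>
      refine ⟨?_, ?_, ?_⟩ <;>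
        simp only [triH, Set.mem_setOf_eq, Matrix.cons_val_zero, Matrix.cons_val_one,
          Matrix.head_cons] <;> nlinarith [sqrt3_sq, sqrt3_pos]
  · intro x hx
    obtain ⟨h1, h2, h3⟩ := hx
    have s3 := sqrt3_sq
    have s3p := sqrt3_pos
    set s := Real.sqrt 3 with hs
    set z : Fin 3 → EuclideanSpace ℝ (Fin 2) :=
      ![!₂[0, 1], !₂[-(s / 2), -(1 / 2)], !₂[s / 2, -(1 / 2)]] with hz
    set w : Fin 3 → ℝ := ![(2 * x 1 + 1) / 3, (1 - x 1 - s * x 0) / 3, (1 - x 1 + s * x 0) / 3]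
      with hw
    have hmem := (convex_convexHull ℝ ({(!₂[0, 1] : EuclideanSpace ℝ (Fin 2)),
        !₂[-(s / 2), -(1 / 2)], !₂[s / 2, -(1 / 2)]} : Set _)).sum_mem
      (t := Finset.univ) (w := w) (z := z)
      (fun i _ => by fin_cases i <;> simp [hw] <;> [skip; nlinarith; nlinarith] <;> linarith)
      (by simp [hw, Fin.sum_univ_three]; ring)
      (fun i _ => subset_convexHull ℝ _ (by fin_cases i <;> simp [hz]))
    rw [Fin.sum_univ_three] at hmem
    have hx' : x = w 0 • z 0 + w 1 • z 1 + w 2 • z 2 := by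
      apply euclid_ext <;>
        simp only [PiLp.add_apply, PiLp.smul_apply, smul_eq_mul, hw, hz] <;>
        · simp only [Matrix.cons_val_zero, Matrix.cons_val_one, Matrix.head_cons,
            Matrix.cons_val_two, Matrix.tail_cons]
          field_simp
          nlinarith [s3]
    rw [triT, hx']
    exact hmem

lemma triR_image_vertices : triR '' {(!₂[0, 1] : EuclideanSpace ℝ (Fin 2)),
    (!₂[-(Real.sqrt 3 / 2), -(1 / 2)] : EuclideanSpace ℝ (Fin 2)),
    (!₂[Real.sqrt 3 / 2, -(1 / 2)] : EuclideanSpace ℝ (Fin 2))} =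
    {(!₂[0, 1] : EuclideanSpace ℝ (Fin 2)),
    (!₂[-(Real.sqrt 3 / 2), -(1 / 2)] : EuclideanSpace ℝ (Fin 2)),
    (!₂[Real.sqrt 3 / 2, -(1 / 2)] : EuclideanSpace ℝ (Fin 2))} := by
  have e1 : triR !₂[0, 1] = (!₂[-(Real.sqrt 3 / 2), -(1 / 2)] : EuclideanSpace ℝ (Fin 2)) := by
    apply euclid_ext <;> simp [triR_apply0, triR_apply1]
  have e2 : triR !₂[-(Real.sqrt 3 / 2), -(1 / 2)] =
      (!₂[Real.sqrt 3 / 2, -(1 / 2)] : EuclideanSpace ℝ (Fin 2)) := by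
    apply euclid_ext <;> simp [triR_apply0, triR_apply1] <;> nlinarith [sqrt3_sq]
  have e3 : triR !₂[Real.sqrt 3 / 2, -(1 / 2)] = (!₂[0, 1] : EuclideanSpace ℝ (Fin 2)) := by
    apply euclid_ext <;> simp [triR_apply0, triR_apply1] <;> nlinarith [sqrt3_sq]
  rw [Set.image_insert_eq, Set.image_insert_eq, Set.image_singleton, e1, e2, e3]
  ext v; simp; tauto

lemma triR_image_triT : triR '' triT = triT := by
  rw [triT, LinearMap.image_convexHull, triR_image_vertices]

noncomputable def euclidProd : EuclideanSpace ℝ (Fin 2) ≃ᵐ ℝ × ℝ :=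
  (MeasurableEquiv.toLp 2 (Fin 2 → ℝ)).symm.trans (MeasurableEquiv.piFinTwo fun _ => ℝ)

lemma euclidProd_apply (x : EuclideanSpace ℝ (Fin 2)) : euclidProd x = (x 0, x 1) := rfl

lemma euclidProd_mp : MeasurePreserving euclidProd volume volume := by
  have := (MeasureTheory.volume_preserving_piFinTwo fun _ => ℝ).comp
    (EuclideanSpace.volume_preserving_symm_measurableEquiv_toLp (Fin 2))
  exact this

def triS : Set (ℝ × ℝ) :=
  {p | -(1/2) ≤ p.2 ∧ Real.sqrt 3 * p.1 + p.2 ≤ 1 ∧ -(Real.sqrt 3) * p.1 + p.2 ≤ 1}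

noncomputable def triC (y : ℝ) : ℝ := (1 - y) / Real.sqrt 3

lemma triS_bounded : triS ⊆ Set.Icc (-1) 1 ×ˢ Set.Icc (-(1/2)) 1 := by
  rintro ⟨x, y⟩ ⟨h1, h2, h3⟩
  have s3 := sqrt3_sq; have s3p := sqrt3_pos
  have hy1 : y ≤ 1 := by nlinarith
  have hs1 : 1 ≤ Real.sqrt 3 := by nlinarith
  constructor
  · constructor <;> simp only <;> nlinarith
  · exact ⟨h1, hy1⟩

lemma isClosed_triS : IsClosed triS := by
  have : triS = {p : ℝ × ℝ | -(1/2) ≤ p.2} ∩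
      ({p : ℝ × ℝ | Real.sqrt 3 * p.1 + p.2 ≤ 1} ∩ {p : ℝ × ℝ | -(Real.sqrt 3) * p.1 + p.2 ≤ 1}) := by
    ext p; simp [triS, Set.mem_setOf_eq, and_assoc]
  rw [this]
  refine (isClosed_le continuous_const continuous_snd).inter
    ((isClosed_le (by fun_prop) continuous_const).inter
      (isClosed_le (by fun_prop) continuous_const))

lemma isCompact_triS : IsCompact triS :=
  (((isCompact_Icc).prod isCompact_Icc).of_isClosed_subset isClosed_triS triS_bounded)

lemma measurableSet_triS : MeasurableSet triS := isClosed_triS.measurableSet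

lemma slice_triS {y : ℝ} (hy : y ∈ Set.Icc (-(1/2) : ℝ) 1) (x : ℝ) :
    (x, y) ∈ triS ↔ x ∈ Set.Icc (-(triC y)) (triC y) := by
  have s3p := sqrt3_pos
  have hc : triC y * Real.sqrt 3 = 1 - y := div_mul_cancel₀ _ s3p.ne'
  simp only [triS, Set.mem_setOf_eq, Set.mem_Icc]
  constructor
  · rintro ⟨_, h2, h3⟩
    constructor <;> nlinarith [s3p, hc]
  · rintro ⟨hl, hr⟩
    refine ⟨hy.1, by nlinarith [s3p, hc], by nlinarith [s3p, hc]⟩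

lemma slice_triS_empty {y : ℝ} (hy : y ∉ Set.Icc (-(1/2) : ℝ) 1) (x : ℝ) :
    (x, y) ∉ triS := by
  rintro ⟨h1, h2, h3⟩
  apply hy
  have s3 := sqrt3_sq; have s3p := sqrt3_pos
  exact ⟨h1, by nlinarith⟩

lemma triC_nonneg {y : ℝ} (hy : y ∈ Set.Icc (-(1/2) : ℝ) 1) : 0 ≤ triC y := by
  have := sqrt3_pos; exact div_nonneg (by linarith [hy.2]) this.le

lemma integral_triS (h : ℝ × ℝ → ℝ) (hc : Continuous h) :
    ∫ p in triS, h p =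
      ∫ y in (-(1/2) : ℝ)..1, ∫ x in (-(triC y))..(triC y), h (x, y) := by
  have hint : IntegrableOn h triS :=
    hc.continuousOn.integrableOn_compact isCompact_triS
  have hind : Integrable (triS.indicator h) (volume : Measure (ℝ × ℝ)) :=
    (integrable_indicator_iff measurableSet_triS).mpr hint
  have hind' : Integrable (triS.indicator h) ((volume : Measure ℝ).prod volume) := by
    rwa [← Measure.volume_eq_prod]
  have inner : ∀ y : ℝ, (∫ x, triS.indicator h (x, y)) =
      (Set.Icc (-(1/2) : ℝ) 1).indicator
        (fun y => ∫ x in (-(triC y))..(triC y), h (x, y)) y := by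
    intro y
    by_cases hy : y ∈ Set.Icc (-(1/2) : ℝ) 1
    · rw [Set.indicator_of_mem hy]
      have : ∀ x : ℝ, triS.indicator h (x, y) =
          (Set.Icc (-(triC y)) (triC y)).indicator (fun x => h (x, y)) x := by
        intro x
        by_cases hx : (x, y) ∈ triS
        · rw [Set.indicator_of_mem hx, Set.indicator_of_mem ((slice_triS hy x).mp hx)]
        · rw [Set.indicator_of_notMem hx,
            Set.indicator_of_notMem (fun hmem => hx ((slice_triS hy x).mpr hmem))]
      simp_rw [this]
      rw [integral_indicator measurableSet_Icc, integral_Icc_eq_integral_Ioc,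
        ← intervalIntegral.integral_of_le (by linarith [triC_nonneg hy])]
    · rw [Set.indicator_of_notMem hy]
      have : ∀ x : ℝ, triS.indicator h (x, y) = 0 := fun x =>
        Set.indicator_of_notMem (slice_triS_empty hy x) h
      simp_rw [this, integral_zero]
  calc ∫ p in triS, h p = ∫ p, triS.indicator h p := (integral_indicator measurableSet_triS).symm
    _ = ∫ p, triS.indicator h p ∂((volume : Measure ℝ).prod volume) := by
        rw [← Measure.volume_eq_prod]
    _ = ∫ y, ∫ x, triS.indicator h (x, y) := integral_prod_symm _ hind'
    _ = ∫ y, (Set.Icc (-(1/2) : ℝ) 1).indicator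
          (fun y => ∫ x in (-(triC y))..(triC y), h (x, y)) y := by simp_rw [inner]
    _ = ∫ y in Set.Icc (-(1/2) : ℝ) 1, ∫ x in (-(triC y))..(triC y), h (x, y) :=
        integral_indicator measurableSet_Icc
    _ = ∫ y in (-(1/2) : ℝ)..1, ∫ x in (-(triC y))..(triC y), h (x, y) := by
        rw [integral_Icc_eq_integral_Ioc, ← intervalIntegral.integral_of_le (by norm_num)]

lemma sqrt3_sq' : (Real.sqrt 3)^2 = 3 := by rw [sq]; exact sqrt3_sq

lemma sqrt3_pow5 : (Real.sqrt 3)^5 = 9 * Real.sqrt 3 := by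
  rw [show (Real.sqrt 3)^5 = ((Real.sqrt 3)^2)^2 * Real.sqrt 3 by ring, sqrt3_sq']; norm_num

lemma sqrt3_pow7 : (Real.sqrt 3)^7 = 27 * Real.sqrt 3 := by
  rw [show (Real.sqrt 3)^7 = ((Real.sqrt 3)^2)^3 * Real.sqrt 3 by ring, sqrt3_sq']; norm_num

lemma sqrt3_pow3 : (Real.sqrt 3)^3 = 3 * Real.sqrt 3 := by
  rw [show (Real.sqrt 3)^3 = ((Real.sqrt 3)^2) * Real.sqrt 3 by ring, sqrt3_sq']

lemma intervalIntegral_cubic (a b k0 k1 k2 k3 : ℝ) :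
    ∫ y in a..b, (k0 + k1 * y + k2 * y^2 + k3 * y^3) =
      k0 * (b - a) + k1 * (b^2 - a^2) / 2 + k2 * (b^3 - a^3) / 3 + k3 * (b^4 - a^4) / 4 := by
  have i0 : IntervalIntegrable (fun _ : ℝ => k0) volume a b := intervalIntegrable_const
  have i1 : IntervalIntegrable (fun y : ℝ => k1 * y) volume a b :=
    ((continuous_const.mul continuous_id).intervalIntegrable a b)
  have i2 : IntervalIntegrable (fun y : ℝ => k2 * y^2) volume a b :=
    ((continuous_const.mul (continuous_pow 2)).intervalIntegrable a b)
  have i3 : IntervalIntegrable (fun y : ℝ => k3 * y^3) volume a b :=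
    ((continuous_const.mul (continuous_pow 3)).intervalIntegrable a b)
  rw [intervalIntegral.integral_add ((i0.add i1).add i2) i3,
    intervalIntegral.integral_add (i0.add i1) i2,
    intervalIntegral.integral_add i0 i1,
    intervalIntegral.integral_const, intervalIntegral.integral_const_mul,
    intervalIntegral.integral_const_mul, intervalIntegral.integral_const_mul,
    integral_id, integral_pow, integral_pow]
  push_cast
  simp only [smul_eq_mul]
  ring

lemma area_triS : (∫ p in triS, (1:ℝ)) = 3 * Real.sqrt 3 / 4 := by
  have s3 := sqrt3_sq; have s3p := sqrt3_pos
  rw [integral_triS _ continuous_const]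
  have inner : ∀ y : ℝ, (∫ x in (-(triC y))..(triC y), (1:ℝ)) =
      (2/Real.sqrt 3) + (-(2/Real.sqrt 3)) * y + 0 * y^2 + 0 * y^3 := by
    intro y
    rw [intervalIntegral.integral_const, smul_eq_mul, mul_one, triC]
    field_simp
    ring
  simp_rw [inner]
  rw [intervalIntegral_cubic]
  field_simp
  ring_nf
  rw [sqrt3_sq']
  ring

lemma moment_triS : (∫ p in triS, (p.1^2 + p.2^2)) = 3 * Real.sqrt 3 / 16 := by
  have s3 := sqrt3_sq; have s3p := sqrt3_pos
  rw [integral_triS _ (by fun_prop)]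
  have inner : ∀ y : ℝ, (∫ x in (-(triC y))..(triC y), (x^2 + y^2)) =
      (2/9/Real.sqrt 3) + (-(2/3/Real.sqrt 3)) * y + (8/3/Real.sqrt 3) * y^2 +
        (-(20/9/Real.sqrt 3)) * y^3 := by
    intro y
    rw [intervalIntegral.integral_add ((continuous_pow 2).intervalIntegrable _ _)
      intervalIntegrable_const, integral_pow, intervalIntegral.integral_const, smul_eq_mul, triC]
    push_cast
    field_simp
    ring_nf
    rw [sqrt3_sq']
    ring
  simp_rw [inner]
  rw [intervalIntegral_cubic]
  field_simp
  ring_nf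
  rw [sqrt3_sq']
  ring

lemma isCompact_triT : IsCompact triT :=
  (Set.finite_singleton _ |>.insert _ |>.insert _).isCompact_convexHull ℝ

lemma measurableSet_triT : MeasurableSet triT :=
  isCompact_triT.isClosed.measurableSet

lemma closure_triT : closure triT = triT := isCompact_triT.isClosed.closure_eq

lemma euclidProd_preimage_triS : euclidProd ⁻¹' triS = triT := by
  rw [triT_eq_triH]
  ext x
  simp only [Set.mem_preimage, euclidProd_apply, triS, triH, Set.mem_setOf_eq]

lemma setIntegral_triT (G : ℝ × ℝ → ℝ) :
    ∫ x in triT, G (euclidProd x) = ∫ p in triS, G p := by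
  rw [← euclidProd_preimage_triS]
  exact euclidProd_mp.setIntegral_preimage_emb euclidProd.measurableEmbedding G triS

lemma area_triT : (∫ _x in triT, (1:ℝ)) = 3 * Real.sqrt 3 / 4 := by
  have h := setIntegral_triT (fun _ : ℝ × ℝ => (1:ℝ))
  rw [← area_triS]
  exact h

lemma moment_triT : (∫ x in triT, ‖x‖^2) = 3 * Real.sqrt 3 / 16 := by
  have : ∀ x : EuclideanSpace ℝ (Fin 2), ‖x‖^2 = (fun p : ℝ × ℝ => p.1^2 + p.2^2) (euclidProd x) :=
    fun x => norm_sq_eq x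
  simp_rw [this]
  rw [← moment_triS]
  exact setIntegral_triT (fun p : ℝ × ℝ => p.1^2 + p.2^2)

lemma rotE_preimage_triT : rotE ⁻¹' triT = triT := by
  ext x
  simp only [Set.mem_preimage, rotE_apply]
  constructor
  · intro h
    have : triR (triR (triR x)) ∈ triR '' (triR '' triT) := ⟨triR (triR x), ⟨triR x, h, rfl⟩, rfl⟩
    rwa [triR_image_triT, triR_image_triT, triR_cube] at this
  · intro h
    rw [← triR_image_triT]
    exact ⟨x, h, rfl⟩

lemma rot_invariance (g : EuclideanSpace ℝ (Fin 2) → ℝ) :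
    ∫ x in triT, g (triR x) = ∫ y in triT, g y := by
  have h := (rotE.measurePreserving).setIntegral_preimage_emb
    rotE.toHomeomorph.measurableEmbedding g triT
  rw [rotE_preimage_triT] at h
  exact h

lemma continuous_triR : Continuous triR := triR.continuous_of_finiteDimensional

lemma mapsTo_triR : Set.MapsTo triR triT triT := by
  intro x hx
  rw [← triR_image_triT]
  exact ⟨x, hx, rfl⟩

/-- `P(x) = 16|x|²/(3√3)` is a probability density on the triangle `T`,
and the rule `P₂^tri` with `x` sampled from `P` is unbiased: for every continuous
`f : cl T → ℝ`, `∫_T Q(f;x) P(x) dx = ∫_T f`. -/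
theorem stmt_9 :
    (∫ x in triT, triP x) = 1 ∧
    ∀ f : EuclideanSpace ℝ (Fin 2) → ℝ, ContinuousOn f (closure triT) →
      ∫ x in triT, triQ2 f x * triP x = ∫ y in triT, f y := by
  have s3 := sqrt3_sq
  have s3p := sqrt3_pos
  constructor
  · have : ∀ x : EuclideanSpace ℝ (Fin 2), triP x = (16/(3*Real.sqrt 3)) * ‖x‖^2 := by
      intro x; rw [triP]; ring
    simp_rw [this]
    rw [MeasureTheory.integral_const_mul, moment_triT]
    field_simp
  · intro f hf
    rw [closure_triT] at hf
    -- integrabilities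
    have hfR : ContinuousOn (fun x => f (triR x)) triT :=
      hf.comp continuous_triR.continuousOn mapsTo_triR
    have hfRR : ContinuousOn (fun x => f (triR (triR x))) triT :=
      (hf.comp continuous_triR.continuousOn mapsTo_triR).comp
        continuous_triR.continuousOn mapsTo_triR
    have I1 : IntegrableOn f triT := hf.integrableOn_compact isCompact_triT
    have I2 : IntegrableOn (fun x => f (triR x)) triT := hfR.integrableOn_compact isCompact_triT
    have I3 : IntegrableOn (fun x => f (triR (triR x))) triT :=
      hfRR.integrableOn_compact isCompact_triT
    have I4 : IntegrableOn (fun x : EuclideanSpace ℝ (Fin 2) => (4*‖x‖^2 - 1) * f 0) triT :=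
      (((continuous_const.mul ((continuous_norm).pow 2)).sub continuous_const).mul
        continuous_const).continuousOn.integrableOn_compact isCompact_triT
    -- a.e. rewrite
    have h0 : (volume : Measure (EuclideanSpace ℝ (Fin 2))) {0} = 0 := measure_singleton 0
    have hae : ∀ᵐ x : EuclideanSpace ℝ (Fin 2), x ∈ triT →
        triQ2 f x * triP x =
          (1/3) * f x + (1/3) * f (triR x) + (1/3) * f (triR (triR x)) + (4*‖x‖^2 - 1) * f 0 := by
      have hne : ∀ᵐ x : EuclideanSpace ℝ (Fin 2), x ≠ 0 := by
        rw [ae_iff]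
        simpa using h0
      filter_upwards [hne] with x hx _
      have hn : ‖x‖ ≠ 0 := norm_ne_zero_iff.mpr hx
      rw [triQ2, triP]
      field_simp
      ring
    rw [setIntegral_congr_ae measurableSet_triT hae]
    have split : ∫ x in triT, ((1/3) * f x + (1/3) * f (triR x) + (1/3) * f (triR (triR x))
          + (4*‖x‖^2 - 1) * f 0) =
        (1/3) * (∫ x in triT, f x) + (1/3) * (∫ x in triT, f (triR x))
          + (1/3) * (∫ x in triT, f (triR (triR x)))
          + ∫ x in triT, (4*‖x‖^2 - 1) * f 0 := by
      have J1 : IntegrableOn (fun x => (1/3 : ℝ) * f x) triT := I1.const_mul _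
      have J2 : IntegrableOn (fun x => (1/3 : ℝ) * f (triR x)) triT := I2.const_mul _
      have J3 : IntegrableOn (fun x => (1/3 : ℝ) * f (triR (triR x))) triT := I3.const_mul _
      have J12 : IntegrableOn (fun x => (1/3 : ℝ) * f x + (1/3 : ℝ) * f (triR x)) triT := J1.add J2
      have J123 : IntegrableOn (fun x => (1/3 : ℝ) * f x + (1/3 : ℝ) * f (triR x)
          + (1/3 : ℝ) * f (triR (triR x))) triT := J12.add J3
      rw [integral_add J123 I4, integral_add J12 J3, integral_add J1 J2,
        MeasureTheory.integral_const_mul, MeasureTheory.integral_const_mul,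
        MeasureTheory.integral_const_mul]
    rw [split]
    have e2 : ∫ x in triT, f (triR x) = ∫ y in triT, f y := rot_invariance f
    have e3 : ∫ x in triT, f (triR (triR x)) = ∫ y in triT, f y := by
      rw [rot_invariance (fun y => f (triR y)), rot_invariance f]
    have e4 : ∫ x in triT, (4*‖x‖^2 - 1) * f 0 = 0 := by
      have : ∀ x : EuclideanSpace ℝ (Fin 2), (4*‖x‖^2 - 1) * f 0 =
          (4 * f 0) * ‖x‖^2 + (-(f 0)) * 1 := by intro x; ring
      simp_rw [this]
      have K1 : IntegrableOn (fun x : EuclideanSpace ℝ (Fin 2) => (4 * f 0) * ‖x‖^2) triT :=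
        (((continuous_norm).pow 2).continuousOn.integrableOn_compact isCompact_triT).const_mul _
      have K2 : IntegrableOn (fun _ : EuclideanSpace ℝ (Fin 2) => (-(f 0)) * 1) triT :=
        integrableOn_const isCompact_triT.measure_lt_top.ne
      rw [integral_add K1 K2, MeasureTheory.integral_const_mul,
        MeasureTheory.integral_const_mul, moment_triT, area_triT]
      ring
    rw [e2, e3, e4]
    ring
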